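/- Let ω be a multiplicative function on permutations. Let γ̄_n = ∑_{π ∈ S_n} ω(π) q^{Ī(π)} where Ī(π) is the number of non-inversions of π, f̄_n = ∑_{β ∈ B_n} ω(β) q^{Ī(β)} where B_n is the set of basic permutations of {1,...,n} (those beginning with their greatest element), and F̄(t) = ∑_{n≥1} f̄_n t^n/[n]_q!. Then ∑_{n≥0} γ̄_n t^n/[n]_q! = E_q[F̄(t)]*_q. -/

import Mathlib

/-- The q-integer `[n]_q = 1 + q + ... + q^{n-1}`. -/
noncomputable def qInt {K : Type*} [CommRing K] (q : K) (n : ℕ) : K :=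
  ∑ i ∈ Finset.range n, q ^ i

/-- The q-factorial `[n]_q!`. -/
noncomputable def qFact {K : Type*} [CommRing K] (q : K) (n : ℕ) : K :=
  ∏ i ∈ Finset.range n, qInt q (i + 1)

/-- The q-derivative `D_q F(t) = (F(qt) - F(t))/((q-1)t)`. -/
noncomputable def qDeriv {K : Type*} [CommRing K] (q : K) (F : PowerSeries K) :
    PowerSeries K :=
  PowerSeries.mk fun n => qInt q (n + 1) * PowerSeries.coeff (n + 1) F

/-- The reduction `red(π)` of a word: the `i`-th smallest letter is replaced by `i`. -/
def redList (l : List ℕ) : List ℕ :=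
  l.map fun a => (l.filter fun b => decide (b < a)).length + 1

/-- The number of non-inversions of the word `a₁⋯aₙ`: pairs `(i,j)` with `i < j`
and `a_i < a_j`. -/
def noninvCount : List ℕ → ℕ
  | [] => 0
  | a :: l => (l.countP fun b => decide (a < b)) + noninvCount l

/-- The basic decomposition of a word (of distinct letters): factor at each
left-to-right maximum, so that each block begins with its greatest element. -/
def basicBlocks : List ℕ → List (List ℕ)
  | [] => []
  | a :: l =>
      (a :: l.takeWhile fun b => decide (b < a)) ::
        basicBlocks (l.dropWhile fun b => decide (b < a))
termination_by l => l.length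
decreasing_by
  simpa using Nat.lt_succ_of_le (List.Sublist.length_le (List.dropWhile_sublist _))

/-- The word `a₁⋯aₙ` (with letters in `{1,…,n}`) of a permutation `π ∈ Sₙ`. -/
def wordOf {n : ℕ} (π : Equiv.Perm (Fin n)) : List ℕ :=
  List.ofFn fun i => (π i : ℕ) + 1

/-!
Both `∑ γ̄ₙ tⁿ/[n]!` and `E_q[F̄]*_q` solve `D_q G = G(qt) · D_q F̄` with `G(0) = 1`, and this
q-differential equation determines `G` coefficient by coefficient.

For `E_q[F̄]*_q` this is the recurrence defining the starred powers, together with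
`q^{C(k+1,2)}/[k+1]! · [k+1] q^{-k} = q^{C(k,2)}/[k]!`.

For the permutations, cut `π ∈ S_{n+1}` at its greatest letter: `π = u (n+1) v`. Then `(n+1) v`
is the last basic block, so `ω(π) = ω(u) ω((n+1) v)`, and the non-inversions of `π` are those of
`u`, those of `(n+1) v`, and the pairs `a < b` with `a` in `u` and `b` in `(n+1) v`. Reducing `u`
and `(n+1) v` gives the weights `γ̄ᵢ` and `f̄_{n-i+1}`, while summing `q^{#pairs}` over the letter
sets of `u` of size `i` gives `q^i [n choose i]_q`. Hence
`γ̄_{n+1} = ∑ᵢ q^i [n choose i]_q γ̄ᵢ f̄_{n-i+1}`, which is the coefficient form of the equation.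
-/

open Finset

section Arrangements

variable {α : Type*} [DecidableEq α]

noncomputable def arrangements (A : Finset α) : Finset (List α) :=
  A.toList.permutations.toFinset

theorem mem_arrangements {A : Finset α} {w : List α} :
    w ∈ arrangements A ↔ w.Nodup ∧ w.toFinset = A := by
  rw [arrangements, List.mem_toFinset, List.mem_permutations]
  constructor
  · intro h
    exact ⟨h.nodup_iff.2 A.nodup_toList, by ext; simp [h.mem_iff]⟩
  · rintro ⟨hw, rfl⟩
    exact (List.perm_ext_iff_of_nodup hw (nodup_toList _)).2 (by simp)

theorem card_arrangements (A : Finset α) : #(arrangements A) = (#A).factorial := by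
  rw [arrangements, List.toFinset_card_of_nodup (List.nodup_permutations _ A.nodup_toList),
    List.length_permutations, length_toList]

theorem append_cons_mem_arrangements_insert_iff {M : α} {A : Finset α} (hM : M ∉ A)
    {u v : List α} :
    u ++ M :: v ∈ arrangements (insert M A) ↔
      u.Nodup ∧ u.toFinset ⊆ A ∧ v ∈ arrangements (A \ u.toFinset) := by
  simp only [mem_arrangements, List.nodup_append, List.nodup_cons, Finset.ext_iff,
    subset_iff, List.toFinset_append, List.toFinset_cons, mem_union, mem_insert, mem_sdiff,
    List.mem_toFinset, List.mem_cons]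
  grind

theorem sum_arrangements_insert {β : Type*} [AddCommMonoid β] {M : α} {A : Finset α}
    (hM : M ∉ A) (g : List α → β) :
    ∑ w ∈ arrangements (insert M A), g w =
      ∑ S ∈ A.powerset, ∑ u ∈ arrangements S, ∑ v ∈ arrangements (A \ S), g (u ++ M :: v) := by
  have hsigma : ∑ S ∈ A.powerset, ∑ u ∈ arrangements S, ∑ v ∈ arrangements (A \ S),
      g (u ++ M :: v) = ∑ x ∈ A.powerset.sigma fun S => arrangements S ×ˢ arrangements (A \ S),
      g (x.2.1 ++ M :: x.2.2) := by
    rw [sum_sigma]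
    exact sum_congr rfl fun S _ => (sum_product' (f := fun u v => g (u ++ M :: v)) _ _).symm
  rw [hsigma]
  symm
  refine sum_bij (fun x _ => x.2.1 ++ M :: x.2.2) ?_ ?_ ?_ fun _ _ => rfl
  · rintro ⟨S, u, v⟩ hx
    simp only [mem_sigma, mem_powerset, mem_product] at hx
    obtain ⟨hS, hu, hv⟩ := hx
    obtain ⟨hnd, rfl⟩ := mem_arrangements.1 hu
    exact (append_cons_mem_arrangements_insert_iff hM).2 ⟨hnd, hS, hv⟩
  · rintro ⟨S, u, v⟩ hx ⟨S', u', v'⟩ hx' h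
    simp only [mem_sigma, mem_powerset, mem_product] at hx hx'
    obtain ⟨hS, hu, hv⟩ := hx
    obtain ⟨-, hu', -⟩ := hx'
    obtain ⟨-, rfl⟩ := mem_arrangements.1 hu
    obtain ⟨-, rfl⟩ := mem_arrangements.1 hu'
    have hMu : M ∉ u := fun h => hM (hS (List.mem_toFinset.2 h))
    have hMv : M ∉ v := fun h =>
      hM (mem_sdiff.1 ((mem_arrangements.1 hv).2 ▸ List.mem_toFinset.2 h)).1
    obtain ⟨rfl, -, rfl⟩ := (List.append_cons_inj_of_notMem hMu hMv).1 h
    rfl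
  · intro w hw
    obtain ⟨u, v, rfl⟩ := List.append_of_mem
      (List.mem_toFinset.1 ((mem_arrangements.1 hw).2 ▸ mem_insert_self M A))
    obtain ⟨hu, hS, hv⟩ := (append_cons_mem_arrangements_insert_iff hM).1 hw
    exact ⟨⟨u.toFinset, u, v⟩, mem_sigma.2 ⟨mem_powerset.2 hS,
      mem_product.2 ⟨mem_arrangements.2 ⟨hu, rfl⟩, hv⟩⟩, rfl⟩

theorem filter_head_arrangements_insert {M : α} {A : Finset α} (hM : M ∉ A) :
    (arrangements (insert M A)).filter (fun w => w.head? = some M) =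
      (arrangements A).image (M :: ·) := by
  ext (_ | ⟨a, v⟩)
  · simp
  · simp only [mem_filter, mem_image, mem_arrangements, List.head?_cons, Option.some.injEq,
      List.cons.injEq, List.nodup_cons, List.toFinset_cons, Finset.ext_iff, mem_insert,
      List.mem_toFinset]
    grind

end Arrangements

section Words

theorem List.Nodup.countP_eq_card_filter {α : Type*} [DecidableEq α] {l : List α}
    (hl : l.Nodup) (p : α → Bool) : l.countP p = #{a ∈ l.toFinset | p a} := by
  rw [List.countP_eq_length_filter, ← List.toFinset_card_of_nodup (hl.filter p),
    List.toFinset_filter]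

def crossNoninv (S T : Finset ℕ) : ℕ :=
  ∑ a ∈ S, #{b ∈ T | a < b}

theorem crossNoninv_insert_right {S T : Finset ℕ} {b : ℕ} (hb : b ∉ T) (hS : ∀ a ∈ S, a < b) :
    crossNoninv S (insert b T) = crossNoninv S T + #S := by
  rw [crossNoninv, crossNoninv, card_eq_sum_ones, ← sum_add_distrib]
  refine sum_congr rfl fun a ha => ?_
  rw [filter_insert, if_pos (hS a ha), card_insert_of_notMem fun h => hb (mem_filter.1 h).1]

theorem crossNoninv_insert_left {S T : Finset ℕ} {a : ℕ} (ha : a ∉ S) (hT : ∀ b ∈ T, b < a) :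
    crossNoninv (insert a S) T = crossNoninv S T := by
  rw [crossNoninv, sum_insert ha, filter_false_of_mem fun b hb => (hT b hb).not_gt, card_empty,
    zero_add, crossNoninv]

theorem noninvCount_append (u x : List ℕ) :
    noninvCount (u ++ x) =
      noninvCount u + noninvCount x + (u.map fun a => x.countP (a < ·)).sum := by
  induction u with
  | nil => simp [noninvCount]
  | cons a u ih =>
    simp only [List.cons_append, noninvCount, List.countP_append, List.map_cons, List.sum_cons, ih]
    omega

theorem noninvCount_append_of_nodup {u x : List ℕ} (hu : u.Nodup) (hx : x.Nodup) :
    noninvCount (u ++ x) = noninvCount u + noninvCount x + crossNoninv u.toFinset x.toFinset := by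
  simp only [noninvCount_append, crossNoninv, List.sum_toFinset _ hu, hx.countP_eq_card_filter,
    decide_eq_true_eq]

theorem noninvCount_map_of_strictMonoOn {g : ℕ → ℕ} {l : List ℕ}
    (hg : StrictMonoOn g {a | a ∈ l}) : noninvCount (l.map g) = noninvCount l := by
  induction l with
  | nil => rfl
  | cons a l ih =>
    simp only [List.map_cons, noninvCount, List.countP_map,
      ih (hg.mono fun b hb => List.mem_cons_of_mem a hb)]
    congr 1
    exact List.countP_congr fun b hb => by
      simp [hg.lt_iff_lt (List.mem_cons_self ..) (List.mem_cons_of_mem a hb)]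

theorem takeWhile_dropWhile_append_cons {α : Type*} {p : α → Bool} {M : α} (hM : p M = false)
    (u v : List α) :
    (u ++ M :: v).takeWhile p = u.takeWhile p ∧
      (u ++ M :: v).dropWhile p = u.dropWhile p ++ M :: v := by
  induction u with
  | nil => simp [hM]
  | cons a u ih => by_cases h : p a <;> simp [h, ih]

theorem basicBlocks_append_cons {M : ℕ} :
    ∀ {u v : List ℕ}, (∀ a ∈ u, a < M) → (∀ b ∈ v, b < M) →
      basicBlocks (u ++ M :: v) = basicBlocks u ++ [M :: v]
  | [], v, _, hv => by
    rw [List.nil_append, basicBlocks.eq_2, List.takeWhile_eq_self_iff.2 (by simpa using hv),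
      List.dropWhile_eq_nil_iff.2 (by simpa using hv), basicBlocks.eq_1]
    rfl
  | a :: u, v, hu, hv => by
    have hMa : decide (M < a) = false := by simpa using (hu a (List.mem_cons_self ..)).le
    obtain ⟨htake, hdrop⟩ := takeWhile_dropWhile_append_cons (p := (· < a)) hMa u v
    rw [List.cons_append, basicBlocks.eq_2, htake, hdrop, basicBlocks_append_cons _ hv,
      basicBlocks.eq_2, List.cons_append]
    exact fun b hb => hu b (List.mem_cons_of_mem a ((List.dropWhile_sublist _).mem hb))
termination_by u => u.length
decreasing_by
  simpa using Nat.lt_succ_of_le (List.dropWhile_sublist _).length_le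

end Words

section Reduction

def rankIn (A : Finset ℕ) (a : ℕ) : ℕ :=
  #{b ∈ A | b < a} + 1

theorem rankIn_strictMonoOn (A : Finset ℕ) : StrictMonoOn (rankIn A) A := by
  intro a ha b _ hab
  have hsub : {x ∈ A | x < a} ⊂ {x ∈ A | x < b} :=
    ⟨fun x hx => by simp only [mem_filter] at hx ⊢; exact ⟨hx.1, hx.2.trans hab⟩,
      fun h => by simpa using h (mem_filter.2 ⟨ha, hab⟩)⟩
  exact Nat.add_lt_add_right (card_lt_card hsub) 1

theorem rankIn_mem_Icc {A : Finset ℕ} {a : ℕ} (ha : a ∈ A) : rankIn A a ∈ Icc 1 #A :=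
  mem_Icc.2 ⟨Nat.le_add_left 1 _, card_lt_card (filter_ssubset.2 ⟨a, ha, lt_irrefl a⟩)⟩

theorem redList_eq_map_rankIn {w : List ℕ} (hw : w.Nodup) :
    redList w = w.map (rankIn w.toFinset) :=
  List.map_congr_left fun a _ => by
    rw [rankIn, ← List.countP_eq_length_filter, hw.countP_eq_card_filter]
    simp

theorem strictMonoOn_rankIn_toFinset (w : List ℕ) :
    StrictMonoOn (rankIn w.toFinset) {a | a ∈ w} :=
  (rankIn_strictMonoOn _).mono fun _ ha => List.mem_toFinset.2 ha

theorem noninvCount_redList {w : List ℕ} (hw : w.Nodup) :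
    noninvCount (redList w) = noninvCount w := by
  rw [redList_eq_map_rankIn hw, noninvCount_map_of_strictMonoOn (strictMonoOn_rankIn_toFinset w)]

theorem redList_cons_of_forall_lt {M : ℕ} {v : List ℕ} (hv : ∀ b ∈ v, b < M) :
    redList (M :: v) = (v.length + 1) :: redList v := by
  have hfilter : v.filter (· < M) = v := List.filter_eq_self.2 (by simpa using hv)
  simp only [redList, List.map_cons, List.filter_cons, lt_irrefl, decide_false, hfilter]
  congr 1
  exact List.map_congr_left fun a ha => by simp [(hv a ha).not_gt]

theorem redList_mem_arrangements {A : Finset ℕ} {w : List ℕ} (hw : w ∈ arrangements A) :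
    redList w ∈ arrangements (Icc 1 #A) := by
  obtain ⟨hnd, rfl⟩ := mem_arrangements.1 hw
  have hnd' : (w.map (rankIn w.toFinset)).Nodup :=
    hnd.map_on fun a ha b hb => (strictMonoOn_rankIn_toFinset w).injOn ha hb
  rw [redList_eq_map_rankIn hnd]
  refine mem_arrangements.2 ⟨hnd', eq_of_subset_of_card_le (fun x hx => ?_) ?_⟩
  · obtain ⟨a, ha, rfl⟩ := List.mem_map.1 (List.mem_toFinset.1 hx)
    exact rankIn_mem_Icc (List.mem_toFinset.2 ha)
  · rw [List.toFinset_card_of_nodup hnd', List.length_map, Nat.card_Icc,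
      List.toFinset_card_of_nodup hnd, Nat.add_sub_cancel]

theorem redList_injOn (A : Finset ℕ) : Set.InjOn redList (arrangements A) := by
  intro w hw w' hw' h
  obtain ⟨hnd, hwA⟩ := mem_arrangements.1 hw
  obtain ⟨hnd', hwA'⟩ := mem_arrangements.1 hw'
  rw [redList_eq_map_rankIn hnd, redList_eq_map_rankIn hnd', hwA, hwA'] at h
  have hinv : ∀ l : List ℕ, l.toFinset = A →
      (l.map (rankIn A)).map (Function.invFunOn (rankIn A) A) = l := fun l hl => by
    rw [List.map_map]
    conv_rhs => rw [← List.map_id l]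
    exact List.map_congr_left fun a ha =>
      (rankIn_strictMonoOn A).injOn.leftInvOn_invFunOn (hl ▸ List.mem_toFinset.2 ha)
  rw [← hinv w hwA, h, hinv w' hwA']

theorem sum_arrangements_redList {β : Type*} [AddCommMonoid β] (A : Finset ℕ)
    (g : List ℕ → β) : ∑ w ∈ arrangements A, g (redList w) = ∑ z ∈ arrangements (Icc 1 #A), g z := by
  have himage : (arrangements A).image redList = arrangements (Icc 1 #A) :=
    eq_of_subset_of_card_le (image_subset_iff.2 fun _ hw => redList_mem_arrangements hw) (by
      rw [card_image_of_injOn (redList_injOn A), card_arrangements, card_arrangements,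
        Nat.card_Icc, Nat.add_sub_cancel])
  rw [← himage, sum_image (redList_injOn A)]

end Reduction

section Permutations

theorem wordOf_injective (n : ℕ) : Function.Injective (wordOf (n := n)) := by
  intro π π' h
  ext i
  simpa using congrFun (List.ofFn_inj.1 h) i

theorem wordOf_mem_arrangements {n : ℕ} (π : Equiv.Perm (Fin n)) :
    wordOf π ∈ arrangements (Icc 1 n) := by
  have hnd : (wordOf π).Nodup :=
    List.nodup_ofFn.2 fun i j h => π.injective (Fin.ext (by simpa using h))
  refine mem_arrangements.2 ⟨hnd, eq_of_subset_of_card_le (fun x hx => ?_) ?_⟩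
  · obtain ⟨i, rfl⟩ := List.mem_ofFn.1 (List.mem_toFinset.1 hx)
    simp
  · rw [List.toFinset_card_of_nodup hnd, wordOf, List.length_ofFn, Nat.card_Icc,
      Nat.add_sub_cancel]

theorem sum_wordOf {β : Type*} [AddCommMonoid β] (n : ℕ) (g : List ℕ → β) :
    ∑ π : Equiv.Perm (Fin n), g (wordOf π) = ∑ w ∈ arrangements (Icc 1 n), g w := by
  have himage : univ.image wordOf = arrangements (Icc 1 n) :=
    eq_of_subset_of_card_le (image_subset_iff.2 fun π _ => wordOf_mem_arrangements π) (by
      rw [card_image_of_injective _ (wordOf_injective n), card_arrangements, card_univ,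
        Fintype.card_perm, Fintype.card_fin, Nat.card_Icc, Nat.add_sub_cancel])
  rw [← himage, sum_image fun _ _ _ _ h => wordOf_injective n h]

theorem sum_wordOf_head {β : Type*} [AddCommMonoid β] (n : ℕ) (g : List ℕ → β) :
    ∑ π ∈ univ.filter (fun π : Equiv.Perm (Fin (n + 1)) => (wordOf π).head? = some (n + 1)),
      g (wordOf π) = ∑ v ∈ arrangements (Icc 1 n), g ((n + 1) :: v) := by
  rw [sum_filter, sum_wordOf (n + 1) fun w => if w.head? = some (n + 1) then g w else 0,
    ← sum_filter, ← insert_Icc_right_eq_Icc_add_one (by omega),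
    filter_head_arrangements_insert (by simp), sum_image fun _ _ _ _ h => List.cons_injective h]

end Permutations

section Weights

variable {R : Type*} [CommRing R] (q : R) (ω : List ℕ → R)

def weight (w : List ℕ) : R :=
  ω w * q ^ noninvCount w

noncomputable def totalWeight (A : Finset ℕ) : R :=
  ∑ w ∈ arrangements A, weight q ω w

noncomputable def basicWeight (n : ℕ) : R :=
  ∑ v ∈ arrangements (Icc 1 n), weight q ω ((n + 1) :: v)

variable {q ω}

theorem weight_redList (hred : ∀ l : List ℕ, l.Nodup → ω l = ω (redList l)) {w : List ℕ}
    (hw : w.Nodup) : weight q ω (redList w) = weight q ω w := by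
  rw [weight, weight, noninvCount_redList hw, ← hred w hw]

theorem weight_append_cons
    (hmult : ∀ l : List ℕ, l.Nodup → ω l = ((basicBlocks l).map ω).prod)
    {u v : List ℕ} {M : ℕ} (hnd : (u ++ M :: v).Nodup) (hu : ∀ a ∈ u, a < M)
    (hv : ∀ b ∈ v, b < M) :
    weight q ω (u ++ M :: v) =
      q ^ (u.length + crossNoninv u.toFinset v.toFinset) * weight q ω u * weight q ω (M :: v) := by
  have hund : u.Nodup := hnd.sublist (List.sublist_append_left _ _)
  have hMv : (M :: v).Nodup := hnd.sublist (List.sublist_append_right _ _)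
  have hω : ω (u ++ M :: v) = ω u * ω (M :: v) := by
    rw [hmult _ hnd, basicBlocks_append_cons hu hv, List.map_append, List.prod_append,
      ← hmult u hund, List.map_singleton, List.prod_singleton]
  have hcross : crossNoninv u.toFinset (M :: v).toFinset =
      crossNoninv u.toFinset v.toFinset + u.length := by
    rw [List.toFinset_cons, crossNoninv_insert_right (by simpa using (List.nodup_cons.1 hMv).1)
      (by simpa using hu), List.toFinset_card_of_nodup hund]
  rw [weight, hω, noninvCount_append_of_nodup hund hMv, hcross, weight, weight]
  ring

theorem totalWeight_eq_totalWeight_Icc (hred : ∀ l : List ℕ, l.Nodup → ω l = ω (redList l))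
    (A : Finset ℕ) : totalWeight q ω A = totalWeight q ω (Icc 1 #A) := by
  rw [totalWeight, totalWeight, ← sum_arrangements_redList]
  exact sum_congr rfl fun w hw => (weight_redList hred (mem_arrangements.1 hw).1).symm

theorem sum_weight_cons_eq_basicWeight (hred : ∀ l : List ℕ, l.Nodup → ω l = ω (redList l))
    {M : ℕ} {B : Finset ℕ} (hB : ∀ b ∈ B, b < M) :
    ∑ v ∈ arrangements B, weight q ω (M :: v) = basicWeight q ω #B := by
  rw [basicWeight, ← sum_arrangements_redList B fun z => weight q ω ((#B + 1) :: z)]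
  refine sum_congr rfl fun v hv => ?_
  obtain ⟨hnd, rfl⟩ := mem_arrangements.1 hv
  have hlt : ∀ b ∈ v, b < M := fun b hb => hB b (List.mem_toFinset.2 hb)
  rw [← weight_redList hred (hnd.cons fun h => lt_irrefl M (hlt M h)),
    redList_cons_of_forall_lt hlt, List.toFinset_card_of_nodup hnd]

theorem totalWeight_insert_of_forall_lt
    (hmult : ∀ l : List ℕ, l.Nodup → ω l = ((basicBlocks l).map ω).prod)
    {M : ℕ} {A : Finset ℕ} (hA : ∀ a ∈ A, a < M) :
    totalWeight q ω (insert M A) = ∑ S ∈ A.powerset,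
      q ^ (#S + crossNoninv S (A \ S)) * totalWeight q ω S *
        ∑ v ∈ arrangements (A \ S), weight q ω (M :: v) := by
  have hM : M ∉ A := fun h => lt_irrefl M (hA M h)
  rw [totalWeight, sum_arrangements_insert hM]
  refine sum_congr rfl fun S hS => ?_
  rw [totalWeight, mul_sum (arrangements S), sum_mul_sum]
  refine sum_congr rfl fun u hu => sum_congr rfl fun v hv => ?_
  obtain ⟨hnd, rfl⟩ := mem_arrangements.1 hu
  have hw := (append_cons_mem_arrangements_insert_iff hM).2 ⟨hnd, mem_powerset.1 hS, hv⟩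
  rw [weight_append_cons hmult (mem_arrangements.1 hw).1, (mem_arrangements.1 hv).2,
    List.toFinset_card_of_nodup hnd]
  · exact fun a ha => hA a (mem_powerset.1 hS (List.mem_toFinset.2 ha))
  · exact fun b hb => hA b (mem_sdiff.1 ((mem_arrangements.1 hv).2 ▸ List.mem_toFinset.2 hb)).1

end Weights

section QBinomial

variable {R : Type*} [CommRing R] (q : R)

noncomputable def qBinom (n i : ℕ) : R :=
  ∑ S ∈ powersetCard i (Icc 1 n), q ^ crossNoninv S (Icc 1 n \ S)

theorem qInt_add (a b : ℕ) : qInt q (a + b) = qInt q a + q ^ a * qInt q b := by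
  simp only [qInt, sum_range_add, mul_sum, pow_add]

theorem qFact_zero : qFact q 0 = 1 :=
  prod_range_zero _

theorem qFact_succ (n : ℕ) : qFact q (n + 1) = qFact q n * qInt q (n + 1) :=
  prod_range_succ _ n

theorem qBinom_zero_right (n : ℕ) : qBinom q n 0 = 1 := by
  simp [qBinom, crossNoninv]

theorem qBinom_of_lt {n i : ℕ} (h : n < i) : qBinom q n i = 0 := by
  rw [qBinom, powersetCard_eq_empty.2 (by simpa using h), sum_empty]

theorem qBinom_succ_succ (n i : ℕ) :
    qBinom q (n + 1) (i + 1) = q ^ (i + 1) * qBinom q n (i + 1) + qBinom q n i := by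
  have hn : n + 1 ∉ Icc 1 n := by simp
  have hlt : ∀ a ∈ Icc 1 n, a < n + 1 := fun a ha => Nat.lt_succ_of_le (mem_Icc.1 ha).2
  have hinj : Set.InjOn (insert (n + 1)) (powersetCard i (Icc 1 n) : Set (Finset ℕ)) :=
    fun S hS T hT h => by
      rw [← erase_insert fun h' => hn ((mem_powersetCard.1 hS).1 h'), h,
        erase_insert fun h' => hn ((mem_powersetCard.1 hT).1 h')]
  have hdisj : Disjoint (powersetCard (i + 1) (Icc 1 n))
      ((powersetCard i (Icc 1 n)).image (insert (n + 1))) :=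
    disjoint_left.2 fun S hS hS' => by
      obtain ⟨T, -, rfl⟩ := mem_image.1 hS'
      exact hn ((mem_powersetCard.1 hS).1 (mem_insert_self _ _))
  rw [qBinom, ← insert_Icc_right_eq_Icc_add_one (by omega), powersetCard_succ_insert hn,
    sum_union hdisj, sum_image hinj, qBinom, qBinom, mul_sum]
  congr 1
  · refine sum_congr rfl fun S hS => ?_
    obtain ⟨hS, hcard⟩ := mem_powersetCard.1 hS
    rw [insert_sdiff_of_notMem _ fun h => hn (hS h),
      crossNoninv_insert_right (by simp) fun a ha => hlt a (hS ha), hcard, pow_add, mul_comm]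
  · refine sum_congr rfl fun S hS => ?_
    obtain ⟨hS, -⟩ := mem_powersetCard.1 hS
    rw [insert_sdiff_insert, sdiff_insert_of_notMem hn,
      crossNoninv_insert_left (fun h => hn (hS h)) fun b hb => hlt b (mem_sdiff.1 hb).1]

theorem qBinom_mul_qFact_mul_qFact {n i : ℕ} (h : i ≤ n) :
    qBinom q n i * (qFact q i * qFact q (n - i)) = qFact q n := by
  induction n generalizing i with
  | zero => simp [Nat.le_zero.1 h, qBinom_zero_right, qFact_zero]
  | succ n ih =>
    rcases i with _ | i
    · simp [qBinom_zero_right, qFact_zero]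
    rw [qBinom_succ_succ]
    rcases (Nat.succ_le_succ_iff.1 h).lt_or_eq with hi | rfl
    · obtain ⟨m, rfl⟩ : ∃ m, n = i + 1 + m := ⟨n - (i + 1), by omega⟩
      have h1 := ih (i := i + 1) (by omega)
      have h2 := ih (i := i) (by omega)
      have hInt := qInt_add q (i + 1) (m + 1)
      rw [show i + 1 + m - (i + 1) = m by omega] at h1
      rw [show i + 1 + m - i = m + 1 by omega, qFact_succ q m] at h2
      rw [show i + 1 + m + 1 - (i + 1) = m + 1 by omega, qFact_succ q (i + 1 + m),
        qFact_succ q i, qFact_succ q m, show i + 1 + m + 1 = i + 1 + (m + 1) by omega, hInt]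
      rw [qFact_succ q i] at h1
      linear_combination (q ^ (i + 1) * qInt q (m + 1)) * h1 + qInt q (i + 1) * h2
    · have h1 := ih (i := i) le_rfl
      rw [Nat.sub_self, qFact_zero] at h1
      rw [qBinom_of_lt q (Nat.lt_succ_self i), Nat.sub_self, qFact_zero, qFact_succ]
      linear_combination qInt q (i + 1) * h1

variable {q} {ω : List ℕ → R}

theorem totalWeight_Icc_succ (hred : ∀ l : List ℕ, l.Nodup → ω l = ω (redList l))
    (hmult : ∀ l : List ℕ, l.Nodup → ω l = ((basicBlocks l).map ω).prod) (n : ℕ) :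
    totalWeight q ω (Icc 1 (n + 1)) = ∑ i ∈ range (n + 1),
      qBinom q n i * q ^ i * totalWeight q ω (Icc 1 i) * basicWeight q ω (n - i) := by
  have hlt : ∀ a ∈ Icc 1 n, a < n + 1 := fun a ha => Nat.lt_succ_of_le (mem_Icc.1 ha).2
  rw [← insert_Icc_right_eq_Icc_add_one (by omega), totalWeight_insert_of_forall_lt hmult hlt,
    sum_powerset, Nat.card_Icc, Nat.add_sub_cancel]
  refine sum_congr rfl fun i _ => ?_
  rw [qBinom, sum_mul, sum_mul, sum_mul]
  refine sum_congr rfl fun S hS => ?_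
  obtain ⟨hsub, rfl⟩ := mem_powersetCard.1 hS
  rw [totalWeight_eq_totalWeight_Icc hred S,
    sum_weight_cons_eq_basicWeight hred fun b hb => hlt b (mem_sdiff.1 hb).1,
    card_sdiff_of_subset hsub, Nat.card_Icc, Nat.add_sub_cancel, pow_add]
  ring

end QBinomial

section QDerivative

variable {R : Type*} [CommRing R] (q : R)

theorem coeff_qDeriv (G : PowerSeries R) (n : ℕ) :
    PowerSeries.coeff n (qDeriv q G) = qInt q (n + 1) * PowerSeries.coeff (n + 1) G :=
  PowerSeries.coeff_mk _ _

theorem coeff_rescale_mul (G H : PowerSeries R) (n : ℕ) :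
    PowerSeries.coeff n (PowerSeries.rescale q G * H) =
      ∑ p ∈ antidiagonal n, q ^ p.1 * PowerSeries.coeff p.1 G * PowerSeries.coeff p.2 H := by
  simp only [PowerSeries.coeff_mul, PowerSeries.coeff_rescale]

variable {q}

theorem eq_of_qDeriv_eq_rescale_mul [IsDomain R] (hq : ∀ m : ℕ, 1 ≤ m → qInt q m ≠ 0)
    {G H D : PowerSeries R} (hG : qDeriv q G = PowerSeries.rescale q G * D)
    (hH : qDeriv q H = PowerSeries.rescale q H * D)
    (h0 : PowerSeries.constantCoeff G = PowerSeries.constantCoeff H) : G = H := by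
  ext n
  induction n using Nat.strong_induction_on with
  | _ n ih =>
    rcases n with _ | n
    · simpa using h0
    · refine mul_left_cancel₀ (hq (n + 1) n.succ_pos) ?_
      rw [← coeff_qDeriv, ← coeff_qDeriv, hG, hH, coeff_rescale_mul, coeff_rescale_mul]
      exact sum_congr rfl fun p hp => by
        rw [ih p.1 (Finset.Nat.antidiagonal.fst_lt hp)]

end QDerivative

section GeneratingFunctions

variable {K : Type*} [Field K] {q : K}

theorem qFact_ne_zero (hq : ∀ m : ℕ, 1 ≤ m → qInt q m ≠ 0) (n : ℕ) : qFact q n ≠ 0 :=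
  prod_ne_zero_iff.2 fun i _ => hq (i + 1) i.succ_pos

noncomputable def weightGF (q : K) (ω : List ℕ → K) : PowerSeries K :=
  PowerSeries.mk fun n => totalWeight q ω (Icc 1 n) / qFact q n

theorem qDeriv_weightGF {ω : List ℕ → K} (hq : ∀ m : ℕ, 1 ≤ m → qInt q m ≠ 0)
    (hred : ∀ l : List ℕ, l.Nodup → ω l = ω (redList l))
    (hmult : ∀ l : List ℕ, l.Nodup → ω l = ((basicBlocks l).map ω).prod) {F : PowerSeries K}
    (hF : ∀ n, PowerSeries.coeff (n + 1) F = basicWeight q ω n / qFact q (n + 1)) :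
    qDeriv q (weightGF q ω) = PowerSeries.rescale q (weightGF q ω) * qDeriv q F := by
  ext n
  rw [coeff_rescale_mul, Finset.Nat.sum_antidiagonal_eq_sum_range_succ fun i j =>
    q ^ i * PowerSeries.coeff i (weightGF q ω) * PowerSeries.coeff j (qDeriv q F)]
  simp only [coeff_qDeriv, weightGF, PowerSeries.coeff_mk, hF]
  have hfact : ∀ m, qInt q (m + 1) * (totalWeight q ω (Icc 1 (m + 1)) / qFact q (m + 1)) =
      totalWeight q ω (Icc 1 (m + 1)) / qFact q m := fun m => by
    rw [qFact_succ]
    field_simp [qFact_ne_zero hq m, hq (m + 1) m.succ_pos]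
  rw [hfact, totalWeight_Icc_succ hred hmult, sum_div]
  refine sum_congr rfl fun i hi => ?_
  have hbinom := qBinom_mul_qFact_mul_qFact q (Nat.lt_succ_iff.1 (mem_range.1 hi))
  rw [qFact_succ q (n - i), ← hbinom]
  field_simp [qFact_ne_zero hq, hq (n - i + 1) (by omega),
    left_ne_zero_of_mul (hbinom ▸ qFact_ne_zero hq n)]

-- Truncating at `k ≤ n` loses nothing, since `Fk k` has order `k` (`coeff_starPow_eq_zero_of_lt`).
noncomputable def qExpStar (q : K) (Fk : ℕ → PowerSeries K) : PowerSeries K :=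
  PowerSeries.mk fun n =>
    ∑ k ∈ range (n + 1), q ^ Nat.choose k 2 / qFact q k * PowerSeries.coeff n (Fk k)

variable {F : PowerSeries K} {Fk : ℕ → PowerSeries K}

theorem qInt_mul_coeff_succ_starPow (hFkrec : ∀ k, 0 < k → qDeriv q (Fk k) =
      PowerSeries.C (qInt q k * (q ^ (k - 1))⁻¹) *
        PowerSeries.rescale q (Fk (k - 1)) * qDeriv q F) (k n : ℕ) :
    qInt q (n + 1) * PowerSeries.coeff (n + 1) (Fk (k + 1)) =
      qInt q (k + 1) * (q ^ k)⁻¹ * ∑ p ∈ antidiagonal n,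
        q ^ p.1 * PowerSeries.coeff p.1 (Fk k) * PowerSeries.coeff p.2 (qDeriv q F) := by
  rw [← coeff_qDeriv, hFkrec (k + 1) k.succ_pos, Nat.add_sub_cancel, mul_assoc,
    PowerSeries.coeff_C_mul, coeff_rescale_mul]

theorem coeff_starPow_eq_zero_of_lt (hq : ∀ m : ℕ, 1 ≤ m → qInt q m ≠ 0)
    (hFkc : ∀ k, 0 < k → PowerSeries.constantCoeff (Fk k) = 0)
    (hFkrec : ∀ k, 0 < k → qDeriv q (Fk k) =
      PowerSeries.C (qInt q k * (q ^ (k - 1))⁻¹) *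
        PowerSeries.rescale q (Fk (k - 1)) * qDeriv q F) {k i : ℕ} (h : i < k) :
    PowerSeries.coeff i (Fk k) = 0 := by
  induction k generalizing i with
  | zero => omega
  | succ k ih =>
    rcases i with _ | i
    · simpa using hFkc (k + 1) k.succ_pos
    · have hrec := qInt_mul_coeff_succ_starPow hFkrec k i
      rw [sum_eq_zero fun p hp => by
        rw [ih (by have := Finset.Nat.antidiagonal.fst_lt hp; omega), mul_zero, zero_mul],
        mul_zero] at hrec
      exact (mul_eq_zero.1 hrec).resolve_left (hq (i + 1) i.succ_pos)

theorem coeff_qExpStar (hvan : ∀ {k i : ℕ}, i < k → PowerSeries.coeff i (Fk k) = 0)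
    {i N : ℕ} (h : i < N) : PowerSeries.coeff i (qExpStar q Fk) =
      ∑ k ∈ range N, q ^ Nat.choose k 2 / qFact q k * PowerSeries.coeff i (Fk k) := by
  rw [qExpStar, PowerSeries.coeff_mk]
  exact sum_subset (range_subset_range.2 h) fun k _ hk => by
    rw [hvan (by simpa using hk), mul_zero]

theorem pow_choose_two_div_qFact_succ (hq0 : q ≠ 0) (hq : ∀ m : ℕ, 1 ≤ m → qInt q m ≠ 0)
    (k : ℕ) : q ^ Nat.choose (k + 1) 2 / qFact q (k + 1) * (qInt q (k + 1) * (q ^ k)⁻¹) =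
      q ^ Nat.choose k 2 / qFact q k := by
  rw [Nat.choose_succ_succ', Nat.choose_one_right, pow_add, qFact_succ]
  field_simp [qFact_ne_zero hq k, hq (k + 1) k.succ_pos, pow_ne_zero k hq0]

theorem qDeriv_qExpStar (hq0 : q ≠ 0) (hq : ∀ m : ℕ, 1 ≤ m → qInt q m ≠ 0) (hFk0 : Fk 0 = 1)
    (hFkc : ∀ k, 0 < k → PowerSeries.constantCoeff (Fk k) = 0)
    (hFkrec : ∀ k, 0 < k → qDeriv q (Fk k) =
      PowerSeries.C (qInt q k * (q ^ (k - 1))⁻¹) *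
        PowerSeries.rescale q (Fk (k - 1)) * qDeriv q F) :
    qDeriv q (qExpStar q Fk) = PowerSeries.rescale q (qExpStar q Fk) * qDeriv q F := by
  have hvan : ∀ {k i : ℕ}, i < k → PowerSeries.coeff i (Fk k) = 0 :=
    coeff_starPow_eq_zero_of_lt hq hFkc hFkrec
  ext n
  rw [coeff_qDeriv, coeff_qExpStar hvan (Nat.lt_succ_self (n + 1)), mul_sum, sum_range_succ',
    hFk0, PowerSeries.coeff_one, if_neg n.succ_ne_zero, mul_zero, mul_zero, add_zero,
    coeff_rescale_mul]
  calc ∑ k ∈ range (n + 1), qInt q (n + 1) *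
        (q ^ Nat.choose (k + 1) 2 / qFact q (k + 1) * PowerSeries.coeff (n + 1) (Fk (k + 1)))
      = ∑ k ∈ range (n + 1), ∑ p ∈ antidiagonal n, q ^ Nat.choose k 2 / qFact q k *
          (q ^ p.1 * PowerSeries.coeff p.1 (Fk k) * PowerSeries.coeff p.2 (qDeriv q F)) :=
        sum_congr rfl fun k _ => by
          rw [mul_left_comm, qInt_mul_coeff_succ_starPow hFkrec, ← mul_assoc,
            pow_choose_two_div_qFact_succ hq0 hq, mul_sum]
    _ = _ := by
        rw [sum_comm]
        refine sum_congr rfl fun p hp => ?_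
        rw [coeff_qExpStar hvan (Finset.Nat.antidiagonal.fst_lt hp), mul_sum, sum_mul]
        exact sum_congr rfl fun k _ => by ring

end GeneratingFunctions

/-- Theorem 6.7 (the variant of Gessel's q-exponential formula, for non-inversions):
for a multiplicative function `ω` on permutations, with
`γ̄ₙ = ∑_{π ∈ Sₙ} ω(π) q^{Ī(π)}`, `f̄ₙ = ∑_{β ∈ Bₙ} ω(β) q^{Ī(β)}` (`Bₙ` the basic
permutations, i.e. those beginning with their greatest element `n`),
`F̄ = ∑_{n≥1} f̄ₙ tⁿ/[n]!`, and `Fk` the starred q-powers of `F̄`, one has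
`∑ γ̄ₙ tⁿ/[n]! = E_q[F̄]*_q`, i.e. coefficientwise
`γ̄ₙ/[n]! = ∑_k (q^{C(k,2)}/[k]!) ⬝ coeff n F̄^{[k]*}`. -/
theorem stmt17 {K : Type*} [Field K] (q : K) (hq0 : q ≠ 0)
    (hq : ∀ m : ℕ, 1 ≤ m → qInt q m ≠ 0)
    (ω : List ℕ → K)
    (hred : ∀ l : List ℕ, l.Nodup → ω l = ω (redList l))
    (hmult : ∀ l : List ℕ, l.Nodup → ω l = ((basicBlocks l).map ω).prod)
    (γ f : ℕ → K)
    (hγ : ∀ n, γ n = ∑ π : Equiv.Perm (Fin n),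
      ω (wordOf π) * q ^ noninvCount (wordOf π))
    (hf : ∀ n, f n = ∑ π ∈ Finset.univ.filter
        (fun π : Equiv.Perm (Fin n) => (wordOf π).head? = some n),
      ω (wordOf π) * q ^ noninvCount (wordOf π))
    (F : PowerSeries K) (hFdef : F = PowerSeries.mk fun n => f n / qFact q n)
    (Fk : ℕ → PowerSeries K) (hFk0 : Fk 0 = 1)
    (hFkc : ∀ k, 0 < k → PowerSeries.constantCoeff (Fk k) = 0)
    (hFkrec : ∀ k, 0 < k → qDeriv q (Fk k) =
      PowerSeries.C (qInt q k * (q ^ (k - 1))⁻¹) *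
        PowerSeries.rescale q (Fk (k - 1)) * qDeriv q F) :
    ∀ n, γ n / qFact q n = ∑ k ∈ Finset.range (n + 1),
      q ^ Nat.choose k 2 / qFact q k * PowerSeries.coeff n (Fk k) := by
  have hω : ω [] = 1 := by simpa [basicBlocks.eq_1] using hmult [] List.nodup_nil
  have hΓ : weightGF q ω = PowerSeries.mk fun n => γ n / qFact q n := by
    ext n
    rw [weightGF, PowerSeries.coeff_mk, PowerSeries.coeff_mk, hγ, totalWeight,
      ← sum_wordOf n (weight q ω)]
    rfl
  have hF : ∀ n, PowerSeries.coeff (n + 1) F = basicWeight q ω n / qFact q (n + 1) := fun n => by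
    rw [hFdef, PowerSeries.coeff_mk, hf, basicWeight, ← sum_wordOf_head n (weight q ω)]
    rfl
  have h0 : PowerSeries.constantCoeff (weightGF q ω) =
      PowerSeries.constantCoeff (qExpStar q Fk) := by
    rw [← PowerSeries.coeff_zero_eq_constantCoeff_apply,
      ← PowerSeries.coeff_zero_eq_constantCoeff_apply, weightGF, qExpStar, PowerSeries.coeff_mk,
      PowerSeries.coeff_mk]
    simp [totalWeight, arrangements, weight, noninvCount, hω, hFk0, qFact_zero]
  have hGF := eq_of_qDeriv_eq_rescale_mul hq (qDeriv_weightGF hq hred hmult hF)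
    (qDeriv_qExpStar hq0 hq hFk0 hFkc hFkrec) h0
  intro n
  simpa [hΓ, qExpStar] using congrArg (PowerSeries.coeff n) hGF
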